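/- Let f : [0, 1] → ℝ be continuous with f(y) ≥ 1 for all y ∈ [0, 1]. For p ∈ (−1, 1) define ℓ(p) = ∫₀¹ (p/f(y)) · (1 − p²/f(y))^{−1/2} dy and V(p) = ∫₀¹ (1 − p²/f(y))^{−1/2} dy. Then for every p ∈ (−1, 1): p·ℓ(p) − ∫₀^p ℓ(q) dq = V(p) − 1, i.e. V(p) − V(0) = ∫₀^p q ℓ'(q) dq, so V is (up to the additive constant V(0) = 1) the potential of the delay function ℓ. -/

import Mathlib

/-! Differentiating under the integral sign, with the integrands dominated on `|q| ≤ r < 1`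
uniformly in `f ≥ 1`, gives `ℓ'(q) = ∫₀¹ (1 - q²/f)^{-3/2} / f ≥ 0` and `V'(q) = q ℓ'(q)`.
Integration by parts turns `∫₀^p q ℓ'` into `p ℓ(p) - ∫₀^p ℓ`, and the fundamental theorem of
calculus turns it into `V(p) - V(0)`; `ℓ'` is integrable because it is a nonnegative
derivative. -/

open Real intervalIntegral
open Set Filter Topology MeasureTheory

theorem potential_of_hasDerivAt {ℓ V ℓ' : ℝ → ℝ} {p : ℝ}
    (hℓ : ∀ q ∈ uIcc 0 p, HasDerivAt ℓ (ℓ' q) q) (hℓ' : ∀ q ∈ uIcc 0 p, 0 ≤ ℓ' q)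
    (hV : ∀ q ∈ uIcc 0 p, HasDerivAt V (q * ℓ' q) q) :
    p * ℓ p - ∫ q in 0..p, ℓ q = V p - V 0 ∧ V p - V 0 = ∫ q in 0..p, q * deriv ℓ q := by
  have hIoo : Ioo (min 0 p) (max 0 p) ⊆ uIcc 0 p := Ioo_subset_Icc_self
  have hint : IntervalIntegrable ℓ' volume 0 p :=
    intervalIntegrable_deriv_of_nonneg (fun q hq => (hℓ q hq).continuousAt.continuousWithinAt)
      (fun q hq => hℓ q (hIoo hq)) (fun q hq => hℓ' q (hIoo hq))
  have hderiv : EqOn (fun q => q * deriv ℓ q) (fun q => q * ℓ' q) (uIcc 0 p) :=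
    fun q hq => by simp only [(hℓ q hq).deriv]
  have hftc : ∫ q in 0..p, q * ℓ' q = V p - V 0 :=
    integral_eq_sub_of_hasDerivAt hV (hint.continuousOn_mul continuousOn_id)
  have hparts : ∫ q in 0..p, q * ℓ' q = p * ℓ p - ∫ q in 0..p, ℓ q := by
    simpa using integral_mul_deriv_eq_deriv_mul (fun q _ => hasDerivAt_id q) hℓ
      intervalIntegrable_const hint
  refine ⟨hparts ▸ hftc, ?_⟩
  rw [integral_congr hderiv, hftc]

theorem hasDerivAt_intervalIntegral_of_bound {F F' : ℝ → ℝ → ℝ} {a b x₀ M : ℝ} {s : Set ℝ}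
    (hab : a ≤ b) (hs : s ∈ 𝓝 x₀) (hF : ∀ x ∈ s, ContinuousOn (F x) (Icc a b))
    (hF' : ContinuousOn (F' x₀) (Icc a b)) (h_bound : ∀ x ∈ s, ∀ t ∈ Icc a b, |F' x t| ≤ M)
    (h_diff : ∀ x ∈ s, ∀ t ∈ Icc a b, HasDerivAt (F · t) (F' x t) x) :
    HasDerivAt (fun x => ∫ t in a..b, F x t) (∫ t in a..b, F' x₀ t) x₀ := by
  have hIoc : uIoc a b ⊆ Icc a b := by rw [uIoc_of_le hab]; exact Ioc_subset_Icc_self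
  have hmeas : ∀ {G : ℝ → ℝ}, ContinuousOn G (Icc a b) →
      AEStronglyMeasurable G (volume.restrict (uIoc a b)) := fun hG =>
    (hG.mono hIoc).aestronglyMeasurable measurableSet_uIoc
  refine (hasDerivAt_integral_of_dominated_loc_of_deriv_le (bound := fun _ => M) hs
    (eventually_of_mem hs fun x hx => hmeas (hF x hx)) ?_ (hmeas hF')
    (ae_of_all _ fun t ht x hx => h_bound x hx t (hIoc ht)) intervalIntegrable_const
    (ae_of_all _ fun t ht x hx => h_diff x hx t (hIoc ht))).2
  exact (hF x₀ (mem_of_mem_nhds hs)).intervalIntegrable_of_Icc hab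

namespace PuckBilliard

noncomputable section

/- The integrands of `V`, of `ℓ`, and the `q`-derivative of the latter, with `c` standing for
the value `f y` of the metric coefficient. -/

def lengthKernel (c q : ℝ) : ℝ := (1 - q ^ 2 / c) ^ (-(1/2) : ℝ)

def shiftKernel (c q : ℝ) : ℝ := q / c * lengthKernel c q

def shiftKernelDeriv (c q : ℝ) : ℝ := (1 - q ^ 2 / c) ^ (-(3/2) : ℝ) / c

section Kernel

variable {c q r : ℝ}

lemma one_sub_sq_le_one_sub_sq_div (hc : 1 ≤ c) (hqr : |q| ≤ r) :
    1 - r ^ 2 ≤ 1 - q ^ 2 / c := by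
  have : q ^ 2 ≤ r ^ 2 := sq_le_sq.mpr (hqr.trans (le_abs_self r))
  have : q ^ 2 / c ≤ q ^ 2 := div_le_self (sq_nonneg q) hc
  linarith

lemma one_sub_sq_div_pos (hc : 1 ≤ c) (hq : |q| < 1) : 0 < 1 - q ^ 2 / c := by
  have : 0 < 1 - |q| ^ 2 := by nlinarith [abs_nonneg q]
  exact this.trans_le (one_sub_sq_le_one_sub_sq_div hc le_rfl)

lemma continuousOn_one_sub_sq_div_rpow (hq : |q| < 1) (e : ℝ) :
    ContinuousOn (fun c => (1 - q ^ 2 / c) ^ e) (Ici 1) := by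
  refine (continuousOn_const.sub (continuousOn_const.div continuousOn_id ?_)).rpow_const ?_
  · exact fun c (hc : 1 ≤ c) => (zero_lt_one.trans_le hc).ne'
  · exact fun c hc => Or.inl (one_sub_sq_div_pos hc hq).ne'

lemma continuousOn_lengthKernel (hq : |q| < 1) : ContinuousOn (lengthKernel · q) (Ici 1) :=
  continuousOn_one_sub_sq_div_rpow hq _

lemma continuousOn_shiftKernel (hq : |q| < 1) : ContinuousOn (shiftKernel · q) (Ici 1) :=
  (continuousOn_const.div continuousOn_id fun c (hc : 1 ≤ c) => (zero_lt_one.trans_le hc).ne').mul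
    (continuousOn_lengthKernel hq)

lemma continuousOn_shiftKernelDeriv (hq : |q| < 1) :
    ContinuousOn (shiftKernelDeriv · q) (Ici 1) :=
  (continuousOn_one_sub_sq_div_rpow hq _).div continuousOn_id
    fun c (hc : 1 ≤ c) => (zero_lt_one.trans_le hc).ne'

lemma hasDerivAt_one_sub_sq_div (c q : ℝ) :
    HasDerivAt (fun q => 1 - q ^ 2 / c) (-(2 * q / c)) q := by
  simpa using ((hasDerivAt_pow 2 q).div_const c).const_sub 1

lemma hasDerivAt_lengthKernel (hu : 1 - q ^ 2 / c ≠ 0) :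
    HasDerivAt (lengthKernel c) (q * shiftKernelDeriv c q) q := by
  refine ((hasDerivAt_one_sub_sq_div c q).rpow_const (p := -(1/2)) (Or.inl hu)).congr_deriv ?_
  rw [shiftKernelDeriv, show (-(1/2) : ℝ) - 1 = -(3/2) by norm_num]
  ring

lemma hasDerivAt_shiftKernel (hc : c ≠ 0) (hu : 0 < 1 - q ^ 2 / c) :
    HasDerivAt (shiftKernel c) (shiftKernelDeriv c q) q := by
  refine (((hasDerivAt_id q).div_const c).mul (hasDerivAt_lengthKernel hu.ne')).congr_deriv ?_
  -- `u ^ (-1/2) = u * u ^ (-3/2)` lets the two terms of the product rule combine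
  have hsplit : lengthKernel c q = (1 - q ^ 2 / c) * (1 - q ^ 2 / c) ^ (-(3/2) : ℝ) := by
    rw [lengthKernel, show (-(1/2) : ℝ) = 1 + -(3/2) by norm_num, rpow_add hu, rpow_one]
  rw [hsplit, shiftKernelDeriv, id]
  field_simp
  ring

lemma shiftKernelDeriv_nonneg (hc : 0 ≤ c) (hu : 0 ≤ 1 - q ^ 2 / c) :
    0 ≤ shiftKernelDeriv c q :=
  div_nonneg (rpow_nonneg hu _) hc

lemma abs_shiftKernelDeriv_le (hc : 1 ≤ c) (hqr : |q| ≤ r) (hr : r < 1) :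
    |shiftKernelDeriv c q| ≤ (1 - r ^ 2) ^ (-(3/2) : ℝ) := by
  have hu := one_sub_sq_le_one_sub_sq_div hc hqr
  have hr2 : 0 < 1 - r ^ 2 := by nlinarith [abs_nonneg q]
  rw [abs_of_nonneg (shiftKernelDeriv_nonneg (zero_le_one.trans hc) (hr2.le.trans hu))]
  calc shiftKernelDeriv c q ≤ (1 - q ^ 2 / c) ^ (-(3/2) : ℝ) :=
        div_le_self (rpow_nonneg (hr2.le.trans hu) _) hc
    _ ≤ (1 - r ^ 2) ^ (-(3/2) : ℝ) := rpow_le_rpow_of_nonpos hr2 hu (by norm_num)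

end Kernel

def shiftDeriv (f : ℝ → ℝ) (q : ℝ) : ℝ := ∫ y in (0:ℝ)..1, shiftKernelDeriv (f y) q

section Integral

variable {f : ℝ → ℝ} (hf1 : ∀ y ∈ Icc (0:ℝ) 1, 1 ≤ f y)
include hf1

lemma shiftDeriv_nonneg {q : ℝ} (hq : |q| < 1) : 0 ≤ shiftDeriv f q :=
  integral_nonneg zero_le_one fun y hy =>
    shiftKernelDeriv_nonneg (zero_le_one.trans (hf1 y hy)) (one_sub_sq_div_pos (hf1 y hy) hq).le

variable (hf : ContinuousOn f (Icc 0 1))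
include hf

theorem hasDerivAt_integral_kernel {K K' : ℝ → ℝ → ℝ} {q₀ : ℝ} (hq₀ : |q₀| < 1)
    (hK : ∀ q, |q| < 1 → ContinuousOn (K · q) (Ici 1)) (hK' : ContinuousOn (K' · q₀) (Ici 1))
    (hdiff : ∀ c, 1 ≤ c → ∀ q, |q| < 1 → HasDerivAt (K c) (K' c q) q)
    (hbound : ∀ r < 1, ∃ M, ∀ c, 1 ≤ c → ∀ q, |q| ≤ r → |K' c q| ≤ M) :
    HasDerivAt (fun q => ∫ y in (0:ℝ)..1, K (f y) q) (∫ y in (0:ℝ)..1, K' (f y) q₀) q₀ := by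
  obtain ⟨r, hq₀r, hr⟩ := exists_between hq₀
  obtain ⟨M, hM⟩ := hbound r hr
  have hs : Ioo (-r) r ∈ 𝓝 q₀ := Ioo_mem_nhds (neg_lt_of_abs_lt hq₀r) (lt_of_abs_lt hq₀r)
  have habs : ∀ q ∈ Ioo (-r) r, |q| < r := fun q hq => abs_lt.mpr hq
  refine hasDerivAt_intervalIntegral_of_bound zero_le_one hs
    (fun q hq => (hK q ((habs q hq).trans hr)).comp hf hf1) (hK'.comp hf hf1)
    (fun q hq y hy => hM _ (hf1 y hy) q (habs q hq).le)
    (fun q hq y hy => hdiff _ (hf1 y hy) q ((habs q hq).trans hr))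

theorem hasDerivAt_integral_shiftKernel {q : ℝ} (hq : |q| < 1) :
    HasDerivAt (fun p => ∫ y in (0:ℝ)..1, shiftKernel (f y) p) (shiftDeriv f q) q :=
  hasDerivAt_integral_kernel hf1 hf hq (fun _ => continuousOn_shiftKernel)
    (continuousOn_shiftKernelDeriv hq)
    (fun _ hc _ hq =>
      hasDerivAt_shiftKernel (zero_lt_one.trans_le hc).ne' (one_sub_sq_div_pos hc hq))
    fun _ hr => ⟨_, fun _ hc _ hqr => abs_shiftKernelDeriv_le hc hqr hr⟩

theorem hasDerivAt_integral_lengthKernel {q : ℝ} (hq : |q| < 1) :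
    HasDerivAt (fun p => ∫ y in (0:ℝ)..1, lengthKernel (f y) p) (q * shiftDeriv f q) q := by
  rw [shiftDeriv, ← intervalIntegral.integral_const_mul]
  refine hasDerivAt_integral_kernel (K' := fun c q => q * shiftKernelDeriv c q) hf1 hf hq
    (fun _ => continuousOn_lengthKernel)
    (continuousOn_const.mul (continuousOn_shiftKernelDeriv hq))
    (fun _ hc _ hq => hasDerivAt_lengthKernel (one_sub_sq_div_pos hc hq).ne')
    fun r hr => ⟨(1 - r ^ 2) ^ (-(3/2) : ℝ), fun _ hc p hpr => ?_⟩
  rw [abs_mul]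
  exact mul_le_of_le_one_left (abs_nonneg _) (hpr.trans hr.le)
    |>.trans (abs_shiftKernelDeriv_le hc hpr hr)

end Integral

end

end PuckBilliard

open PuckBilliard

theorem generalized_puck_potential
    (f : ℝ → ℝ) (hf : ContinuousOn f (Set.Icc 0 1))
    (hf1 : ∀ y ∈ Set.Icc (0:ℝ) 1, 1 ≤ f y)
    (ℓ V : ℝ → ℝ)
    (hℓ : ∀ p, ℓ p = ∫ y in (0:ℝ)..1, (p / f y) * (1 - p ^ 2 / f y) ^ (-(1/2) : ℝ))
    (hV : ∀ p, V p = ∫ y in (0:ℝ)..1, (1 - p ^ 2 / f y) ^ (-(1/2) : ℝ)) :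
    ∀ p ∈ Set.Ioo (-1:ℝ) 1,
      p * ℓ p - (∫ q in (0:ℝ)..p, ℓ q) = V p - 1 ∧
      V p - V 0 = ∫ q in (0:ℝ)..p, q * deriv ℓ q := by
  intro p hp
  have hℓ : ℓ = fun p => ∫ y in (0:ℝ)..1, shiftKernel (f y) p := funext hℓ
  have hV : V = fun p => ∫ y in (0:ℝ)..1, lengthKernel (f y) p := funext hV
  have hV0 : V 0 = 1 := by simp [hV, lengthKernel]
  have habs : ∀ q ∈ uIcc 0 p, |q| < 1 := fun q hq =>
    (by simpa using abs_sub_left_of_mem_uIcc hq : |q| ≤ |p|).trans_lt (abs_lt.mpr hp)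
  obtain ⟨hparts, hftc⟩ := potential_of_hasDerivAt (ℓ' := shiftDeriv f)
    (fun q hq => hℓ ▸ hasDerivAt_integral_shiftKernel hf1 hf (habs q hq))
    (fun q hq => shiftDeriv_nonneg hf1 (habs q hq))
    (fun q hq => hV ▸ hasDerivAt_integral_lengthKernel hf1 hf (habs q hq))
  exact ⟨hV0 ▸ hparts, hftc⟩
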